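/- arXiv:2510.25790 — 2 statements merged into one kernel-verified Lean document; each statement's English description precedes it below -/
import Mathlib

section
/- Let K ≤ H ≤ G be finite groups. If (G, K) is a strong Gelfand pair, then (G, H) is a strong Gelfand pair. Equivalently (contrapositive): if (G, H) is not a strong Gelfand pair, then neither is (G, K). -/
open CategoryTheory
open scoped ComplexOrder

/-- The standard inner product of class functions on a finite group `H`:
`⟨α, β⟩_H = (1/|H|) ∑ h, α h * conj (β h)`. -/
noncomputable def charInner (H : Type) [Group H] [Finite H] (α β : H → ℂ) : ℂ :=
  letI : Fintype H := Fintype.ofFinite H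
  (Nat.card H : ℂ)⁻¹ * ∑ h : H, α h * (starRingEnd ℂ) (β h)

/-- `χ : G → ℂ` is an irreducible complex character of `G`: the character of some
irreducible (simple) finite-dimensional complex representation of `G`. -/
def IsIrreducibleCharacter (G : Type) [Group G] (χ : G → ℂ) : Prop :=
  ∃ V : FDRep ℂ G, Simple V ∧ χ = V.character

/-- `(G, H)` is a Gelfand pair: every irreducible complex character of `G`
restricts to `H` with `⟨χ↓H, 1_H⟩_H ≤ 1`. -/
def IsGelfandPair (G : Type) [Group G] [Finite G] (H : Subgroup G) : Prop :=
  ∀ χ : G → ℂ, IsIrreducibleCharacter G χ →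
    charInner H (fun h : H => χ (h : G)) (fun _ => 1) ≤ 1

/-- `(G, H)` is a strong Gelfand pair: for all irreducible complex characters `χ` of `G`
and `ψ` of `H`, `⟨χ↓H, ψ⟩_H ≤ 1`. -/
def IsStrongGelfandPair (G : Type) [Group G] [Finite G] (H : Subgroup G) : Prop :=
  ∀ (χ : G → ℂ) (ψ : H → ℂ), IsIrreducibleCharacter G χ → IsIrreducibleCharacter H ψ →
    charInner H (fun h : H => χ (h : G)) ψ ≤ 1


section StrongGelfandAuxSection
open CategoryTheory Module Polynomial

namespace StrongGelfandAux

lemma pow_apply_eigen {M : Type} [AddCommGroup M] [Module ℂ M] (f : Module.End ℂ M) (μ : ℂ)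
    (k : ℕ) {x : M} (hx : x ∈ f.eigenspace μ) : (f ^ k) x = μ ^ k • x := by
  induction k with
  | zero => simp
  | succ k ih =>
    rw [pow_succ', Module.End.mul_apply, ih, map_smul, Module.End.mem_eigenspace_iff.mp hx,
      smul_smul, mul_comm, ← pow_succ']

lemma conj_trace_of_pow_eq_one {M : Type} [AddCommGroup M] [Module ℂ M]
    [FiniteDimensional ℂ M] (f : Module.End ℂ M) {n : ℕ} (hn : 0 < n) (hf : f ^ n = 1) :
    (starRingEnd ℂ) (LinearMap.trace ℂ M f) = LinearMap.trace ℂ M (f ^ (n - 1)) := by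
  have hsq : Squarefree (X ^ n - C (1 : ℂ)) :=
    (Polynomial.separable_X_pow_sub_C (1 : ℂ)
      (Nat.cast_ne_zero.mpr hn.ne') one_ne_zero).squarefree
  have haev : aeval f (X ^ n - C (1 : ℂ)) = 0 := by simp [map_sub, hf]
  have hss : f.IsSemisimple := Module.End.isSemisimple_of_squarefree_aeval_eq_zero hsq haev
  have hsup : ⨆ μ : ℂ, f.eigenspace μ = ⊤ := by
    have h1 := f.iSup_maxGenEigenspace_eq_top
    have h2 : ∀ μ : ℂ, f.maxGenEigenspace μ = f.eigenspace μ :=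
      hss.isFinitelySemisimple.maxGenEigenspace_eq_eigenspace
    simpa only [h2] using h1
  have hindep := f.eigenspaces_iSupIndep
  have hint : DirectSum.IsInternal (fun μ : ℂ => f.eigenspace μ) :=
    (DirectSum.isInternal_submodule_iff_iSupIndep_and_iSup_eq_top _).mpr ⟨hindep, hsup⟩
  have hfin : {μ : ℂ | f.eigenspace μ ≠ ⊥}.Finite :=
    WellFoundedGT.finite_ne_bot_of_iSupIndep hindep
  have hmaps : ∀ (k : ℕ) (μ : ℂ), Set.MapsTo (f ^ k) (f.eigenspace μ) (f.eigenspace μ) := by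
    intro k μ x hx
    rw [pow_apply_eigen f μ k hx]
    exact Submodule.smul_mem _ _ hx
  have htr : ∀ k : ℕ, LinearMap.trace ℂ M (f ^ k) =
      ∑ μ ∈ hfin.toFinset, μ ^ k * (finrank ℂ (f.eigenspace μ) : ℂ) := by
    intro k
    rw [LinearMap.trace_eq_sum_trace_restrict' hint hfin (hmaps k)]
    refine Finset.sum_congr rfl fun μ _ => ?_
    have hres : (f ^ k).restrict (hmaps k μ) = (μ ^ k) • (1 : Module.End ℂ (f.eigenspace μ)) := by
      ext x
      simp [LinearMap.restrict_apply, pow_apply_eigen f μ k x.2]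
      exact pow_apply_eigen f μ k x.2
    rw [hres, map_smul, smul_eq_mul]
    congr 1
    exact LinearMap.trace_one ..
  have hroot : ∀ μ ∈ hfin.toFinset, μ ^ n = 1 := by
    intro μ hμ
    rw [Set.Finite.mem_toFinset] at hμ
    obtain ⟨x, hx, hx0⟩ := Submodule.exists_mem_ne_zero_of_ne_bot hμ
    have h1 := pow_apply_eigen f μ n hx
    rw [hf, Module.End.one_apply] at h1
    have h2 : (μ ^ n - 1) • x = 0 := by
      rw [sub_smul, one_smul, ← h1, sub_self]
    rcases smul_eq_zero.mp h2 with h | h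
    · exact sub_eq_zero.mp h
    · exact absurd h hx0
  have hconj : ∀ μ ∈ hfin.toFinset, (starRingEnd ℂ) μ = μ ^ (n - 1) := by
    intro μ hμ
    have hμn := hroot μ hμ
    have habs : ‖μ‖ = 1 := by
      have h1 : ‖μ‖ ^ n = 1 := by
        rw [← norm_pow, hμn, norm_one]
      rcases lt_trichotomy (‖μ‖) 1 with h | h | h
      · exact absurd h1 (by nlinarith [pow_lt_one₀ (norm_nonneg μ) h hn.ne'])
      · exact h
      · exact absurd h1 (by nlinarith [one_lt_pow₀ h hn.ne'])
    have hinv : (starRingEnd ℂ) μ = μ⁻¹ := by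
      rw [Complex.inv_def, Complex.normSq_eq_norm_sq, habs]
      simp
    have hmul : μ ^ (n - 1) * μ = 1 := by
      rw [← pow_succ, Nat.sub_add_cancel hn, hμn]
    rw [hinv, eq_comm]
    exact eq_inv_of_mul_eq_one_left hmul
  have h1 := htr 1
  rw [pow_one] at h1
  rw [h1, htr (n - 1), map_sum]
  refine Finset.sum_congr rfl fun μ hμ => ?_
  rw [map_mul, map_pow, hconj μ hμ, pow_one]
  congr 1
  · exact map_natCast (starRingEnd ℂ) _

lemma conj_character {A : Type} [Group A] [Finite A] (V : FDRep ℂ A) (a : A) :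
    (starRingEnd ℂ) (V.character a) = V.character a⁻¹ := by
  have hn : 0 < orderOf a := orderOf_pos a
  have hpow : (V.ρ a) ^ orderOf a = 1 := by
    rw [← map_pow, pow_orderOf_eq_one, map_one]
  have h := conj_trace_of_pow_eq_one (V.ρ a) hn hpow
  have ha : a⁻¹ = a ^ (orderOf a - 1) := by
    rw [eq_comm, eq_inv_iff_mul_eq_one, ← pow_succ, Nat.sub_add_cancel hn, pow_orderOf_eq_one]
  rw [FDRep.character, FDRep.character, ha, map_pow]
  exact h

lemma charInner_char_eq_finrank {A : Type} [Group A] [Finite A] (V W : FDRep ℂ A) :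
    charInner A V.character W.character = (finrank ℂ (W ⟶ V) : ℂ) := by
  letI : Fintype A := Fintype.ofFinite A
  haveI : Invertible (Fintype.card A : ℂ) :=
    invertibleOfNonzero (Nat.cast_ne_zero.mpr Fintype.card_ne_zero)
  rw [charInner]
  have hsum : ∀ a : A, V.character a * (starRingEnd ℂ) (W.character a)
      = (FDRep.of (Representation.linHom W.ρ V.ρ)).character a := by
    intro a
    rw [conj_character, FDRep.char_linHom, mul_comm]
  rw [Nat.card_eq_fintype_card]
  calc ((Fintype.card A : ℂ))⁻¹ * ∑ a : A, V.character a * (starRingEnd ℂ) (W.character a)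
      = ⅟(Fintype.card A : ℂ) • ∑ a : A, (FDRep.of (Representation.linHom W.ρ V.ρ)).character a := by
        rw [invOf_eq_inv, smul_eq_mul]
        congr 1; exact Finset.sum_congr rfl fun a _ => hsum a
    _ = (finrank ℂ ((Representation.linHom W.ρ V.ρ).invariants) : ℂ) := by
        rw [invOf_eq_inv, smul_eq_mul, ← Nat.card_eq_fintype_card]
        haveI : Invertible (Nat.card A : ℂ) :=
          invertibleOfNonzero (Nat.cast_ne_zero.mpr Nat.card_pos.ne')
        rw [FDRep.average_char_eq_finrank_invariants]
        congr 1
    _ = (finrank ℂ (W ⟶ V) : ℂ) := by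
        congr 1
        exact (Representation.linHom.invariantsEquivFDRepHom W V).finrank_eq

variable {A : Type} [Group A]

/-- The underlying linear map of a morphism of `FDRep`s. -/
def lmap {X Y : FDRep ℂ A} (f : X ⟶ Y) : X →ₗ[ℂ] Y := f.hom.hom.hom

lemma lmap_comp {X Y Z : FDRep ℂ A} (f : X ⟶ Y) (g : Y ⟶ Z) :
    lmap (f ≫ g) = (lmap g).comp (lmap f) := rfl

lemma lmap_zero {X Y : FDRep ℂ A} : lmap (0 : X ⟶ Y) = 0 := rfl

lemma lmap_eq_zero_iff {X Y : FDRep ℂ A} (f : X ⟶ Y) : lmap f = 0 ↔ f = 0 := by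
  constructor
  · intro h
    apply Action.Hom.ext
    apply FGModuleCat.hom_ext
    exact h
  · rintro rfl; rfl

lemma comm_lm {X Y : FDRep ℂ A} (f : X ⟶ Y) (a : A) :
    (lmap f).comp (X.ρ a) = (Y.ρ a).comp (lmap f) := by
  have := congrArg (fun u => u.hom.hom) (f.comm a); exact this

lemma comm_apply {X Y : FDRep ℂ A} (f : X ⟶ Y) (a : A) (x : X) :
    lmap f (X.ρ a x) = Y.ρ a (lmap f x) :=
  LinearMap.congr_fun (comm_lm f a) x

lemma mono_of_injective {X Y : FDRep ℂ A} (f : X ⟶ Y) (h : Function.Injective (lmap f)) :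
    Mono f := by
  constructor
  intro Z u v huv
  apply Action.Hom.ext
  apply FGModuleCat.hom_ext
  show lmap u = lmap v
  apply LinearMap.ext
  intro x
  apply h
  have hc : (lmap f).comp (lmap u) = (lmap f).comp (lmap v) := by
    rw [← lmap_comp, ← lmap_comp, huv]
  exact LinearMap.congr_fun hc x

/-- Subrepresentation on an invariant submodule. -/
noncomputable def subrep (X : FDRep ℂ A) (p : Submodule ℂ X)
    (hp : ∀ a : A, ∀ x ∈ p, X.ρ a x ∈ p) : FDRep ℂ A :=
  FDRep.of
    { toFun := fun a => (X.ρ a).restrict (fun x hx => hp a x hx)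
      map_one' := by ext x; simp [LinearMap.restrict_apply]
      map_mul' := by intro a b; ext x; simp [LinearMap.restrict_apply] }

noncomputable def subrepι (X : FDRep ℂ A) (p : Submodule ℂ X)
    (hp : ∀ a : A, ∀ x ∈ p, X.ρ a x ∈ p) : subrep X p hp ⟶ X where
  hom := FGModuleCat.ofHom p.subtype
  comm := by intro a; apply FGModuleCat.hom_ext; apply LinearMap.ext; intro x; rfl

lemma injective_of_mono {X Y : FDRep ℂ A} (f : X ⟶ Y) [hm : Mono f] :
    Function.Injective (lmap f) := by
  have hinv : ∀ a : A, ∀ x ∈ LinearMap.ker (lmap f), X.ρ a x ∈ LinearMap.ker (lmap f) := by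
    intro a x hx
    rw [LinearMap.mem_ker] at hx ⊢
    rw [comm_apply, hx, map_zero]
  set p := LinearMap.ker (lmap f)
  have hcomp : subrepι X p hinv ≫ f = 0 := by
    apply Action.Hom.ext
    apply FGModuleCat.hom_ext
    show lmap (subrepι X p hinv ≫ f) = lmap 0
    apply LinearMap.ext
    rintro ⟨x, hx⟩
    exact hx
  have h0 : subrepι X p hinv = (0 : subrep X p hinv ⟶ X) := by
    refine (cancel_mono f).mp (hcomp.trans ?_)
    rw [Limits.zero_comp]
  have hker : p = ⊥ := by
    ext x
    constructor
    · intro hx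
      have h1 : lmap (subrepι X p hinv) = 0 := (lmap_eq_zero_iff _).mpr h0
      have h2 : x = 0 := LinearMap.congr_fun h1 ⟨x, hx⟩
      rw [Submodule.mem_bot]
      exact h2
    · intro hx
      rw [Submodule.mem_bot] at hx
      rw [hx]
      exact zero_mem p
  exact LinearMap.ker_eq_bot.mp hker

lemma isIso_of_bijective {X Y : FDRep ℂ A} (f : X ⟶ Y) (hb : Function.Bijective (lmap f)) :
    IsIso f := by
  let e : X ≃ₗ[ℂ] Y := LinearEquiv.ofBijective (lmap f) hb
  have he : ∀ x : X, e x = lmap f x := fun x => rfl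
  have hcomm : ∀ (a : A) (y : Y), e.symm (Y.ρ a y) = X.ρ a (e.symm y) := by
    intro a y
    apply hb.1
    show lmap f _ = lmap f _
    have h1 : lmap f (e.symm (Y.ρ a y)) = Y.ρ a y := by
      rw [← he]; exact e.apply_symm_apply _
    have h2 : lmap f (X.ρ a (e.symm y)) = Y.ρ a (lmap f (e.symm y)) := comm_apply f a _
    rw [h1, h2, ← he, e.apply_symm_apply]
  let g : Y ⟶ X :=
    { hom := FGModuleCat.ofHom e.symm.toLinearMap
      comm := by intro a; apply FGModuleCat.hom_ext; apply LinearMap.ext; intro y; exact hcomm a y }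
  have hgf : lmap g = e.symm.toLinearMap := rfl
  refine ⟨g, ?_, ?_⟩
  · apply Action.Hom.ext
    apply FGModuleCat.hom_ext
    show lmap (f ≫ g) = lmap (𝟙 X)
    apply LinearMap.ext
    intro x
    show e.symm (lmap f x) = x
    rw [← he]; exact e.symm_apply_apply x
  · apply Action.Hom.ext
    apply FGModuleCat.hom_ext
    show lmap (g ≫ f) = lmap (𝟙 Y)
    apply LinearMap.ext
    intro y
    show lmap f (e.symm y) = y
    rw [← he]; exact e.apply_symm_apply y

lemma finrank_pos_of_simple (X : FDRep ℂ A) [hs : Simple X] : 0 < finrank ℂ X := by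
  rcases Nat.eq_zero_or_pos (finrank ℂ X) with h | h
  · exfalso
    have hsub : Subsingleton X := (finrank_zero_iff (R := ℂ)).mp h
    apply id_nonzero X
    rw [← lmap_eq_zero_iff]
    apply LinearMap.ext
    intro x
    exact @Subsingleton.elim _ hsub _ _
  · exact h

lemma exists_simple_subrep :
    ∀ (n : ℕ) (X : FDRep ℂ A), finrank ℂ X = n → 0 < n →
      ∃ (T : FDRep ℂ A) (ι : T ⟶ X), Simple T ∧ Mono ι := by
  intro n
  induction n using Nat.strong_induction_on with
  | _ n ih =>
    intro X hXn hpos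
    by_cases hs : Simple X
    · exact ⟨X, 𝟙 X, hs, inferInstance⟩
    · have hne : ¬ ∀ (Y : FDRep ℂ A) (f : Y ⟶ X), Mono f → (IsIso f ↔ f ≠ 0) := by
        intro h
        exact hs ⟨fun {Y} f hf => h Y f hf⟩
      push_neg at hne
      obtain ⟨Y, f, hm, hiff⟩ := hne
      haveI := hm
      rcases hiff with ⟨hiso, hf0⟩ | ⟨hiso, hf0⟩
      · exfalso
        have hid : 𝟙 X = 0 := by
          have h1 := congrArg (fun g : Y ⟶ X => inv f ≫ g) hf0
          simp only [Limits.comp_zero] at h1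
          rw [← IsIso.inv_hom_id f]
          exact h1
        have h1 : lmap (𝟙 X) = 0 := (lmap_eq_zero_iff _).mpr hid
        have hsub : Subsingleton X := by
          constructor
          intro x y
          have hx' : x = (0 : X →ₗ[ℂ] X) x := LinearMap.congr_fun h1 x
          have hy' : y = (0 : X →ₗ[ℂ] X) y := LinearMap.congr_fun h1 y
          rw [LinearMap.zero_apply] at hx' hy'
          rw [hx', hy']
        rw [(finrank_zero_iff (R := ℂ)).mpr hsub] at hXn
        omega
      · have hinj : Function.Injective (lmap f) := injective_of_mono f
        have hle : finrank ℂ Y ≤ finrank ℂ X := LinearMap.finrank_le_finrank_of_injective hinj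
        have hlt : finrank ℂ Y < finrank ℂ X := by
          rcases lt_or_eq_of_le hle with h | h
          · exact h
          · exfalso
            apply hiso
            apply isIso_of_bijective
            exact ⟨hinj, (LinearMap.injective_iff_surjective_of_finrank_eq_finrank h).mp hinj⟩
        have hYpos : 0 < finrank ℂ Y := by
          rcases Nat.eq_zero_or_pos (finrank ℂ Y) with h | h
          · exfalso
            have hsub : Subsingleton Y := (finrank_zero_iff (R := ℂ)).mp h
            apply hf0
            rw [← lmap_eq_zero_iff]
            apply LinearMap.ext
            intro x
            rw [show x = 0 from @Subsingleton.elim _ hsub _ _]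
            simp
          · exact h
        obtain ⟨T, ι, hT, hι⟩ := ih (finrank ℂ Y) (hXn ▸ hlt) Y rfl hYpos
        haveI := hι
        exact ⟨T, ι ≫ f, hT, mono_comp ι f⟩

lemma mono_ne_zero {T X : FDRep ℂ A} (g : T ⟶ X) [hm : Mono g] [hs : Simple T] : g ≠ 0 := by
  intro h0
  apply id_nonzero T
  apply (cancel_mono g).mp
  rw [h0, Limits.comp_zero, Limits.zero_comp]

end StrongGelfandAux

end StrongGelfandAuxSection

open StrongGelfandAux Module in
/-- If `K ≤ H ≤ G` and `(G, K)` is a strong Gelfand pair, then so is `(G, H)`. -/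
theorem strongGelfandPair_of_le {G : Type} [Group G] [Finite G] (K H : Subgroup G)
    (hKH : K ≤ H) (hK : IsStrongGelfandPair G K) : IsStrongGelfandPair G H := by
  intro χ ψ hχ hψ
  obtain ⟨V, hV, hχV⟩ := hχ
  obtain ⟨W, hW, hψW⟩ := hψ
  haveI := hV; haveI := hW
  subst hχV hψW
  let resH := Action.res (FGModuleCat ℂ) H.subtype
  let resKH := Action.res (FGModuleCat ℂ) (Subgroup.inclusion hKH)
  let XH : FDRep ℂ ↥H := resH.obj V
  let XK : FDRep ℂ ↥K := resKH.obj XH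
  let WK : FDRep ℂ ↥K := resKH.obj W
  have hchar1 : (fun h : ↥H => V.character ↑h) = XH.character := rfl
  rw [hchar1, charInner_char_eq_finrank XH W]
  have hWpos : 0 < finrank ℂ WK := finrank_pos_of_simple W
  obtain ⟨T, ι, hT, hι⟩ := exists_simple_subrep (finrank ℂ WK) WK rfl hWpos
  haveI := hT; haveI := hι
  have hK1 := hK V.character T.character ⟨V, hV, rfl⟩ ⟨T, hT, rfl⟩
  have hchar2 : (fun k : ↥K => V.character ↑k) = XK.character := rfl
  rw [hchar2, charInner_char_eq_finrank XK T] at hK1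
  have hmK : finrank ℂ (T ⟶ XK) ≤ 1 := by exact_mod_cast hK1
  let Φ : (W ⟶ XH) →ₗ[ℂ] (T ⟶ XK) :=
    { toFun := fun f => ι ≫ resKH.map f
      map_add' := by
        intro f g
        have h1 : resKH.map (f + g) = resKH.map f + resKH.map g := by
          apply Action.Hom.ext; rfl
        rw [h1, Preadditive.comp_add]
      map_smul' := by
        intro c f
        have h1 : resKH.map (c • f) = c • resKH.map f := by
          apply Action.Hom.ext; rfl
        rw [h1, Linear.comp_smul]
        rfl }
  have hΦinj : Function.Injective Φ := by
    rw [injective_iff_map_eq_zero]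
    intro f hf
    by_contra hf0
    haveI : Mono f := mono_of_nonzero_from_simple hf0
    haveI : Mono (resKH.map f) := by
      apply mono_of_injective
      exact injective_of_mono f
    haveI : Mono (ι ≫ resKH.map f) := mono_comp _ _
    exact mono_ne_zero (ι ≫ resKH.map f) hf
  have hle : finrank ℂ (W ⟶ XH) ≤ finrank ℂ (T ⟶ XK) :=
    LinearMap.finrank_le_finrank_of_injective hΦinj
  have hfin : finrank ℂ (W ⟶ XH) ≤ 1 := le_trans hle hmK
  exact_mod_cast hfin
end

section
/- Let Q₈ denote the quaternion group of order 8. A proper subgroup H of Q₈ is a strong Gelfand subgroup of Q₈ if and only if H has order 4 (i.e., if and only if H is a maximal subgroup of Q₈). In particular, the center of Q₈ (of order 2) and the trivial subgroup are not strong Gelfand subgroups. -/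
open CategoryTheory
open scoped ComplexOrder

open Module LinearMap

section ConjTrace


private theorem powmod {M : Type*} [Monoid M] {n : ℕ} (x : M) (hx : x ^ n = 1) (m : ℕ) :
    x ^ (m % n) = x ^ m := by
  conv_rhs => rw [← Nat.div_add_mod m n]
  rw [pow_add, pow_mul, hx, one_pow, one_mul]

theorem conj_trace_of_pow_eq_one {V : Type} [AddCommGroup V] [Module ℂ V]
    [FiniteDimensional ℂ V] (A : V →ₗ[ℂ] V) {n : ℕ} (hn : 0 < n) (hA : A ^ n = 1) :
    (starRingEnd ℂ) (trace ℂ V A) = trace ℂ V (A ^ (n - 1)) := by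
  haveI : NeZero n := NeZero.of_pos hn
  have hn' : (n : ℂ) ≠ 0 := Nat.cast_ne_zero.2 hn.ne'
  set ζ : ℂ := Complex.exp (2 * Real.pi * Complex.I / n) with hζdef
  have hζ : IsPrimitiveRoot ζ n := Complex.isPrimitiveRoot_exp n hn.ne'
  have hζn : ζ ^ n = 1 := hζ.pow_eq_one
  have hζ0 : ζ ≠ 0 := hζ.ne_zero hn.ne'
  have hpow_n : ∀ m : ℕ, (ζ ^ m) ^ n = 1 := by
    intro m
    rw [← pow_mul, mul_comm, pow_mul, hζn, one_pow]
  have geom : ∀ w : ℂ, w ^ n = 1 → (∑ t : Fin n, w ^ (t : ℕ)) = if w = 1 then (n : ℂ) else 0 := by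
    intro w hw
    rw [Fin.sum_univ_eq_sum_range]
    split_ifs with h1
    · simp [h1]
    · rw [geom_sum_eq h1, hw, sub_self, zero_div]
  set P : Fin n → (V →ₗ[ℂ] V) :=
    fun t => (n : ℂ)⁻¹ • ∑ j : Fin n, ((ζ ^ (t : ℕ))⁻¹) ^ (j : ℕ) • A ^ (j : ℕ) with hPdef
  -- Fourier inversion
  have key : ∀ k : ℕ, (∑ t : Fin n, (ζ ^ (t : ℕ)) ^ k • P t) = A ^ k := by
    intro k
    have step1 : ∀ t : Fin n, (ζ ^ (t : ℕ)) ^ k • P t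
        = ∑ j : Fin n, ((n : ℂ)⁻¹ * (ζ ^ k * (ζ ^ (j : ℕ))⁻¹) ^ (t : ℕ)) • A ^ (j : ℕ) := by
      intro t
      rw [hPdef, smul_smul, Finset.smul_sum]
      apply Finset.sum_congr rfl
      intro j _
      rw [smul_smul]
      congr 1
      rw [mul_pow, ← pow_mul, ← pow_mul, ← inv_pow, ← inv_pow, ← pow_mul]
      field_simp
      ring
    rw [Finset.sum_congr rfl fun t _ => step1 t, Finset.sum_comm]
    have step2 : ∀ j : Fin n,
        (∑ t : Fin n, ((n : ℂ)⁻¹ * (ζ ^ k * (ζ ^ (j : ℕ))⁻¹) ^ (t : ℕ)) • A ^ (j : ℕ))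
        = (if j = (⟨k % n, Nat.mod_lt _ hn⟩ : Fin n) then (1:ℂ) else 0) • A ^ (j : ℕ) := by
      intro j
      rw [← Finset.sum_smul]
      congr 1
      rw [← Finset.mul_sum]
      have hw : (ζ ^ k * (ζ ^ (j : ℕ))⁻¹) ^ n = 1 := by
        rw [mul_pow, hpow_n, inv_pow, hpow_n, inv_one, mul_one]
      rw [geom _ hw]
      have hiff : (ζ ^ k * (ζ ^ (j : ℕ))⁻¹ = 1) ↔ j = (⟨k % n, Nat.mod_lt _ hn⟩ : Fin n) := by
        rw [mul_inv_eq_one₀ (pow_ne_zero _ hζ0)]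
        constructor
        · intro h
          have hz : ζ ^ (j : ℕ) = ζ ^ (k % n) := by rw [powmod ζ hζn k]; exact h.symm
          exact Fin.ext (hζ.pow_inj j.isLt (Nat.mod_lt _ hn) hz)
        · intro h
          have h' : (j : ℕ) = k % n := by rw [h]
          rw [← powmod ζ hζn k, ← h']
      rw [if_congr hiff rfl rfl]
      split_ifs with h1
      · exact inv_mul_cancel₀ hn'
      · exact mul_zero _
    rw [Finset.sum_congr rfl fun j _ => step2 j]
    simp only [ite_smul, one_smul, zero_smul]
    rw [Finset.sum_ite_eq' Finset.univ _ (fun j : Fin n => A ^ (j : ℕ))]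
    simp only [Finset.mem_univ, if_true]
    exact powmod A hA k
  -- each P t is a projection
  have hPproj : ∀ t : Fin n, (P t) * (P t) = P t := by
    intro t
    have hlamn : ((ζ ^ (t : ℕ))⁻¹) ^ n = 1 := by rw [inv_pow, hpow_n, inv_one]
    set F : ℕ → (V →ₗ[ℂ] V) := fun m => ((ζ ^ (t : ℕ))⁻¹) ^ m • A ^ m with hF
    have hFadd : ∀ j k : Fin n, F (j : ℕ) * F (k : ℕ) = F (((j + k : Fin n)) : ℕ) := by
      intro j k
      rw [hF]
      simp only
      rw [smul_mul_assoc, mul_smul_comm, smul_smul, ← pow_add, ← pow_add, Fin.add_def]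
      rw [powmod _ hlamn, powmod A hA]
    have hSS : (∑ j : Fin n, F (j : ℕ)) * (∑ k : Fin n, F (k : ℕ))
        = (n : ℕ) • ∑ j : Fin n, F (j : ℕ) := by
      rw [Finset.sum_mul_sum]
      calc (∑ j : Fin n, ∑ k : Fin n, F (j:ℕ) * F (k:ℕ))
          = ∑ _j : Fin n, ∑ m : Fin n, F (m : ℕ) := by
            apply Finset.sum_congr rfl
            intro j _
            rw [Finset.sum_congr rfl fun k _ => hFadd j k]
            exact Equiv.sum_comp (Equiv.addLeft j) (fun m : Fin n => F (m : ℕ))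
        _ = (n : ℕ) • ∑ m : Fin n, F (m : ℕ) := by
            rw [Finset.sum_const, Finset.card_univ, Fintype.card_fin]
    rw [hPdef]
    simp only
    rw [smul_mul_assoc, mul_smul_comm, smul_smul, hSS, ← Nat.cast_smul_eq_nsmul ℂ, smul_smul]
    congr 1
    field_simp
  -- trace of each P t is a natural number
  have hPtr : ∀ t : Fin n, ∃ m : ℕ, trace ℂ V (P t) = (m : ℂ) := by
    intro t
    have hproj : IsProj (range (P t)) (P t) := by
      refine ⟨fun x => mem_range_self _ x, ?_⟩
      rintro x ⟨y, rfl⟩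
      exact congrFun (congrArg DFunLike.coe (hPproj t)) y
    exact ⟨finrank ℂ (range (P t)), hproj.trace⟩
  -- conclude
  have conj_root : ∀ w : ℂ, w ^ n = 1 → (starRingEnd ℂ) w = w ^ (n - 1) := by
    intro w hw
    have habs : ‖w‖ = 1 := Complex.norm_eq_one_of_pow_eq_one hw hn.ne'
    have hinv : w⁻¹ = (starRingEnd ℂ) w := Complex.inv_eq_conj habs
    rw [← hinv]
    have : w * w ^ (n - 1) = 1 := by
      rw [← pow_succ', Nat.sub_add_cancel hn]
      exact hw
    exact inv_eq_of_mul_eq_one_right this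
  have traceA : trace ℂ V A = ∑ t : Fin n, ζ ^ (t : ℕ) * trace ℂ V (P t) := by
    conv_lhs => rw [← pow_one A, ← key 1]
    rw [map_sum]
    apply Finset.sum_congr rfl
    intro t _
    rw [pow_one, map_smul, smul_eq_mul]
  have traceA' : trace ℂ V (A ^ (n - 1)) = ∑ t : Fin n, (ζ ^ (t : ℕ)) ^ (n - 1) * trace ℂ V (P t) := by
    rw [← key (n - 1), map_sum]
    apply Finset.sum_congr rfl
    intro t _
    rw [map_smul, smul_eq_mul]
  rw [traceA, traceA', map_sum]
  apply Finset.sum_congr rfl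
  intro t _
  obtain ⟨m, hm⟩ := hPtr t
  rw [map_mul, hm, conj_root _ (hpow_n _)]
  congr 1
  exact Complex.conj_natCast m

end ConjTrace

section Bridge

theorem conj_character {H : Type} [Group H] [Finite H] (W : FDRep ℂ H) (h : H) :
    (starRingEnd ℂ) (W.character h) = W.character h⁻¹ := by
  have hn : 0 < orderOf h := orderOf_pos h
  have hA : (W.ρ h) ^ (orderOf h) = 1 := by
    rw [← map_pow, pow_orderOf_eq_one, map_one]
  have hinv : h⁻¹ = h ^ (orderOf h - 1) := by
    rw [eq_comm, ← mul_eq_one_iff_eq_inv, ← pow_succ, Nat.sub_add_cancel hn, pow_orderOf_eq_one]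
  rw [FDRep.character, FDRep.character, hinv, map_pow]
  exact conj_trace_of_pow_eq_one _ hn hA

theorem charInner_eq_finrank_hom {H : Type} [Group H] [Finite H] (V W : FDRep ℂ H) :
    charInner H V.character W.character = (finrank ℂ (W ⟶ V) : ℂ) := by
  letI : Fintype H := Fintype.ofFinite H
  letI : Invertible ((Fintype.card H : ℂ)) :=
    invertibleOfNonzero (Nat.cast_ne_zero.2 Fintype.card_pos.ne')
  have e1 : charInner H V.character W.character
      = ⅟ (Fintype.card H : ℂ) • ∑ h : H, V.character h * W.character h⁻¹ := by
    rw [charInner, invOf_eq_inv, smul_eq_mul, Nat.card_eq_fintype_card]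
    congr 1
    exact Finset.sum_congr rfl fun h _ => by rw [conj_character]
  rw [e1]
  conv_lhs =>
    enter [2, 2, g]
    rw [mul_comm, ← FDRep.char_dual, ← Pi.mul_apply, ← FDRep.char_tensor]
    rw [FDRep.char_iso (FDRep.dualTensorIsoLinHom W.ρ V)]
  rw [invOf_eq_inv, smul_eq_mul, ← Nat.card_eq_fintype_card, FDRep.average_char_eq_finrank_invariants]
  rw [show (FDRep.of (Representation.linHom W.ρ V.ρ)).ρ = Representation.linHom W.ρ V.ρ from
    FDRep.of_ρ' (Representation.linHom W.ρ V.ρ)]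
  exact congrArg Nat.cast
    ((Representation.linHom.invariantsEquivFDRepHom (G := H) W V).finrank_eq)

end Bridge

section SimpleCriterion

variable {G : Type} [Group G]

/-- The subrepresentation on an invariant subspace. -/
noncomputable def subRep (X : FDRep ℂ G) (p : Submodule ℂ X)
    (hp : ∀ g : G, ∀ x ∈ p, X.ρ g x ∈ p) : FDRep ℂ G :=
  FDRep.of
    { toFun := fun g => (X.ρ g).restrict (hp g)
      map_one' := by ext x; simp [LinearMap.restrict_apply]
      map_mul' := by intro g g'; ext x; simp [LinearMap.restrict_apply] }

noncomputable def subRepHom (X : FDRep ℂ G) (p : Submodule ℂ X)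
    (hp : ∀ g : G, ∀ x ∈ p, X.ρ g x ∈ p) : subRep X p hp ⟶ X where
  hom := ConcreteCategory.ofHom p.subtype
  comm := fun g => by ext x; rfl

theorem FDRep.mono_injective {X Y : FDRep ℂ G} (f : Y ⟶ X) [Mono f] :
    Function.Injective f.hom := by
  have hp : ∀ g : G, ∀ x ∈ LinearMap.ker (f.hom.hom.hom : Y →ₗ[ℂ] X),
      Y.ρ g x ∈ LinearMap.ker (f.hom.hom.hom : Y →ₗ[ℂ] X) := by
    intro g x hx
    rw [LinearMap.mem_ker] at hx ⊢
    have hc : (f.hom.hom.hom : Y →ₗ[ℂ] X) ((Y.ρ g) x) = (X.ρ g) ((f.hom.hom.hom : Y →ₗ[ℂ] X) x) :=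
      congrArg (fun φ => φ.hom.hom x) (f.comm g)
    show (f.hom.hom.hom : Y →ₗ[ℂ] X) ((Y.ρ g) x) = 0
    rw [hc, hx, map_zero]
  set ι := subRepHom Y _ hp
  have hzero : ι ≫ f = 0 := by
    ext x
    exact x.2
  have hι : ι = 0 := (cancel_mono f).1 (by rw [hzero, Limits.zero_comp])
  have hker : LinearMap.ker (f.hom.hom.hom : Y →ₗ[ℂ] X) = ⊥ := by
    ext x
    simp only [Submodule.mem_bot]
    constructor
    · intro hx
      have := congrArg (fun φ : subRep Y _ hp ⟶ Y => φ.hom.hom.hom ⟨x, hx⟩) hι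
      exact this
    · intro hx
      simp [hx]
  exact LinearMap.ker_eq_bot.1 hker

theorem FDRep.isIso_of_bijective {X Y : FDRep ℂ G} (f : Y ⟶ X)
    (hf : Function.Bijective f.hom) : IsIso f := by
  let e : Y ≃ₗ[ℂ] X := LinearEquiv.ofBijective (f.hom.hom.hom : Y →ₗ[ℂ] X) hf
  have : IsIso f.hom := by
    refine ⟨ConcreteCategory.ofHom (e.symm : X →ₗ[ℂ] Y), ?_, ?_⟩
    · ext x
      exact e.symm_apply_apply x
    · ext x
      exact e.apply_symm_apply x
  exact Action.isIso_of_hom_isIso f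

theorem FDRep.simple_of_invariant_submodules (X : FDRep ℂ G)
    (hdim : 0 < finrank ℂ X)
    (hsub : ∀ p : Submodule ℂ X, (∀ g : G, ∀ x ∈ p, X.ρ g x ∈ p) → p = ⊥ ∨ p = ⊤) :
    Simple X := by
  haveI : Nontrivial X := by
    rcases finrank_pos_iff.1 hdim with h
    exact h
  constructor
  intro Y f hm
  constructor
  · intro hiso h0
    obtain ⟨x, hx⟩ := exists_ne (0 : X)
    apply hx
    have h1 : inv f ≫ f = 𝟙 X := IsIso.inv_hom_id f
    have h2 : inv f ≫ f = inv f ≫ 0 := congrArg (fun t => inv f ≫ t) h0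
    rw [Limits.comp_zero] at h2
    rw [h2] at h1
    have := congrArg (fun φ : X ⟶ X => φ.hom.hom.hom x) h1
    simpa using this.symm
  · intro hne
    have hr : ∀ g : G, ∀ x ∈ LinearMap.range (f.hom.hom.hom : Y →ₗ[ℂ] X),
        X.ρ g x ∈ LinearMap.range (f.hom.hom.hom : Y →ₗ[ℂ] X) := by
      rintro g x ⟨y, rfl⟩
      refine ⟨Y.ρ g y, ?_⟩
      have hc := congrArg (fun φ => φ.hom.hom y) (f.comm g)
      simpa using hc
    rcases hsub _ hr with hbot | htop
    · exfalso
      apply hne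
      have hz : ∀ y : Y, (f.hom.hom.hom : Y →ₗ[ℂ] X) y = 0 := by
        intro y
        have : (f.hom.hom.hom : Y →ₗ[ℂ] X) y ∈ LinearMap.range (f.hom.hom.hom : Y →ₗ[ℂ] X) :=
          LinearMap.mem_range_self _ y
        rwa [hbot, Submodule.mem_bot] at this
      apply Action.Hom.ext
      rw [Action.zero_hom]
      ext y; exact hz y
    · exact FDRep.isIso_of_bijective f
        ⟨FDRep.mono_injective f, LinearMap.range_eq_top.1 htop⟩

end SimpleCriterion

section QuaternionRep

open Matrix Complex QuaternionGroup

noncomputable section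

abbrev Q8 := QuaternionGroup 2

def Dmat : Matrix (Fin 2) (Fin 2) ℂ := !![I, 0; 0, -I]
def Smat : Matrix (Fin 2) (Fin 2) ℂ := !![0, 1; -1, 0]

theorem D4 : Dmat ^ 4 = 1 := by
  have h2 : Dmat ^ 2 = !![-1, 0; 0, -1] := by
    rw [pow_two, Dmat]
    norm_num [Matrix.mul_fin_two, Complex.I_mul_I]
  have h44 : Dmat ^ 4 = (Dmat ^ 2) * (Dmat ^ 2) := by
    rw [show (4:ℕ) = 2 + 2 from rfl, pow_add]
  rw [h44, h2, Matrix.one_fin_two]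
  norm_num [Matrix.mul_fin_two]

theorem S2 : Smat * Smat = Dmat ^ 2 := by
  rw [pow_two, Smat, Dmat]
  norm_num [Matrix.mul_fin_two, Complex.I_mul_I]

theorem DS : Dmat * Smat = Smat * Dmat ^ 3 := by
  rw [Smat, Dmat]
  norm_num [pow_succ, pow_zero, Matrix.mul_fin_two, Matrix.one_fin_two, Complex.I_mul_I]

theorem DSpow : ∀ m : ℕ, Dmat ^ m * Smat = Smat * Dmat ^ (3 * m) := by
  intro m
  induction m with
  | zero => simp
  | succ k ih =>
    rw [pow_succ, mul_assoc, DS, ← mul_assoc, ih, mul_assoc, ← pow_add]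
    ring_nf

theorem DSD (a b : ℕ) : Dmat ^ a * (Smat * Dmat ^ b) = Smat * Dmat ^ (3 * a + b) := by
  rw [← mul_assoc, DSpow, mul_assoc, ← pow_add]

theorem SDSD (a b : ℕ) : (Smat * Dmat ^ a) * (Smat * Dmat ^ b) = Dmat ^ (2 + 3 * a + b) := by
  have h1 : (Smat * Dmat ^ a) * (Smat * Dmat ^ b) = Smat * ((Dmat ^ a * Smat) * Dmat ^ b) := by
    rw [mul_assoc, mul_assoc]
  rw [h1, DSpow, mul_assoc, ← pow_add, ← mul_assoc, S2, ← pow_add]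
  congr 1
  ring

theorem Dmod : ∀ m : ℕ, Dmat ^ (m % 4) = Dmat ^ m := by
  intro m
  conv_rhs => rw [← Nat.div_add_mod m 4]
  rw [pow_add, pow_mul, D4, one_pow, one_mul]

theorem Dval (c : ZMod (2 * 2)) (m : ℕ) (h : c = (m : ZMod (2 * 2))) :
    Dmat ^ c.val = Dmat ^ m := by
  have : c.val = m % 4 := by
    rw [h, ZMod.val_natCast]
  rw [this, Dmod]

/-- the underlying matrix function of the 2-dimensional representation -/
def qmat : Q8 → Matrix (Fin 2) (Fin 2) ℂ
  | .a i => Dmat ^ i.val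
  | .xa i => Smat * Dmat ^ i.val

theorem qmat_mul (x y : Q8) : qmat (x * y) = qmat x * qmat y := by
  rcases x with i | i <;> rcases y with j | j
  · show Dmat ^ (i + j).val = Dmat ^ i.val * Dmat ^ j.val
    rw [Dval (i + j) (i.val + j.val) (by push_cast [ZMod.natCast_val, ZMod.cast_id]; ring),
      pow_add]
  · show Smat * Dmat ^ (j - i).val = Dmat ^ i.val * (Smat * Dmat ^ j.val)
    rw [Dval (j - i) (3 * i.val + j.val) ?_, DSD]
    · push_cast [ZMod.natCast_val, ZMod.cast_id]
      have h4 : (4 : ZMod (2 * 2)) = 0 := by decide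
      linear_combination (-(1 : ZMod (2*2))) * i * h4
  · show Smat * Dmat ^ (i + j).val = Smat * Dmat ^ i.val * Dmat ^ j.val
    rw [Dval (i + j) (i.val + j.val) (by push_cast [ZMod.natCast_val, ZMod.cast_id]; ring),
      pow_add, mul_assoc]
  · show Dmat ^ ((2 : ZMod (2*2)) + j - i).val = Smat * Dmat ^ i.val * (Smat * Dmat ^ j.val)
    rw [Dval _ (2 + 3 * i.val + j.val) ?_, SDSD]
    · push_cast [ZMod.natCast_val, ZMod.cast_id]
      have h4 : (4 : ZMod (2 * 2)) = 0 := by decide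
      linear_combination (-(1 : ZMod (2*2))) * i * h4

/-- The 2-dimensional representation of `Q₈`. -/
def qRep : Representation ℂ Q8 (Fin 2 → ℂ) where
  toFun g := Matrix.toLin' (qmat g)
  map_one' := by
    show Matrix.toLin' (qmat (.a 0)) = _
    have : qmat (.a 0) = 1 := by
      show Dmat ^ (0 : ZMod (2*2)).val = 1
      rw [ZMod.val_zero, pow_zero]
    rw [this, Matrix.toLin'_one]
    rfl
  map_mul' x y := by
    show Matrix.toLin' (qmat (x * y)) = _
    rw [qmat_mul, Matrix.toLin'_mul]
    rfl

def QV : FDRep ℂ Q8 := FDRep.of qRep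

theorem QV_char (g : Q8) : QV.character g = (qmat g).trace := by
  show trace ℂ (Fin 2 → ℂ) (Matrix.toLin' (qmat g)) = _
  rw [trace_eq_matrix_trace ℂ (Pi.basisFun ℂ (Fin 2)), LinearMap.toMatrix_eq_toMatrix',
    LinearMap.toMatrix'_toLin']

theorem QV_char_one : QV.character 1 = 2 := by
  rw [show (1 : Q8) = .a 0 from rfl, QV_char]
  show (Dmat ^ (0 : ZMod (2*2)).val).trace = 2
  rw [ZMod.val_zero, pow_zero]
  norm_num [Matrix.trace_fin_two, Matrix.one_fin_two]

theorem QV_char_a2 : QV.character (.a 2) = -2 := by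
  rw [QV_char]
  show (Dmat ^ (2 : ZMod (2*2)).val).trace = -2
  have : (2 : ZMod (2*2)).val = 2 := by decide
  rw [this, pow_two, Dmat]
  norm_num [Matrix.mul_fin_two, Matrix.trace_fin_two, Complex.I_mul_I]
-- 1-dimensional reps are simple
theorem FDRep.simple_of_finrank_one {G : Type} [Group G] (X : FDRep ℂ G)
    (hdim : finrank ℂ X = 1) : Simple X := by
  apply FDRep.simple_of_invariant_submodules X (by rw [hdim]; norm_num)
  intro p _
  rcases eq_or_ne p ⊥ with h | h
  · exact Or.inl h
  · right
    apply Submodule.eq_top_of_finrank_eq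
    have h1 : 0 < finrank ℂ p := by
      rw [Module.finrank_pos_iff]
      exact Submodule.nontrivial_iff_ne_bot.2 h
    have h2 : finrank ℂ p ≤ 1 := hdim ▸ Submodule.finrank_le p
    omega
theorem qv_subspaces (p : Submodule ℂ (Fin 2 → ℂ))
    (hp : ∀ g : Q8, ∀ x ∈ p, Matrix.toLin' (qmat g) x ∈ p) : p = ⊥ ∨ p = ⊤ := by
  rcases eq_or_ne p ⊥ with h | h
  · exact Or.inl h
  right
  obtain ⟨v, hv, hv0⟩ := Submodule.exists_mem_ne_zero_of_ne_bot h
  have hq1 : qmat (.a 1) = Dmat := by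
    show Dmat ^ (1 : ZMod (2*2)).val = Dmat
    rw [show (1 : ZMod (2*2)).val = 1 from rfl, pow_one]
  have hq0 : qmat (.xa 0) = Smat := by
    show Smat * Dmat ^ (0 : ZMod (2*2)).val = Smat
    rw [show (0 : ZMod (2*2)).val = 0 from rfl, pow_zero, mul_one]
  have hDv : Dmat.mulVec v ∈ p := by
    have h' := hp (.a 1) v hv
    rwa [hq1, Matrix.toLin'_apply] at h'
  have hSmem : ∀ w ∈ p, Smat.mulVec w ∈ p := by
    intro w hw
    have h' := hp (.xa 0) w hw
    rwa [hq0, Matrix.toLin'_apply] at h'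
  set e0 : Fin 2 → ℂ := ![1, 0] with he0
  set e1 : Fin 2 → ℂ := ![0, 1] with he1
  have hDv_eq : Dmat.mulVec v = ![I * v 0, -I * v 1] := by
    funext i
    fin_cases i <;>
      simp [Dmat, Matrix.mulVec, dotProduct, Fin.sum_univ_two]
  have hSv_eq : ∀ w : Fin 2 → ℂ, Smat.mulVec w = ![w 1, -w 0] := by
    intro w
    funext i
    fin_cases i <;>
      simp [Smat, Matrix.mulVec, dotProduct, Fin.sum_univ_two]
  have key : e0 ∈ p ∧ e1 ∈ p := by
    have hw : ![(0:ℂ), 2 * I * v 1] ∈ p := by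
      have hmem := p.sub_mem (p.smul_mem I hv) hDv
      have heq : I • v - Dmat.mulVec v = ![(0:ℂ), 2 * I * v 1] := by
        rw [hDv_eq]
        funext i
        fin_cases i <;> simp <;> ring
      rwa [heq] at hmem
    have hw' : ![2 * I * v 0, (0:ℂ)] ∈ p := by
      have hmem := p.add_mem (p.smul_mem I hv) hDv
      have heq : I • v + Dmat.mulVec v = ![2 * I * v 0, (0:ℂ)] := by
        rw [hDv_eq]
        funext i
        fin_cases i <;> simp <;> ring
      rwa [heq] at hmem
    rcases eq_or_ne (v 1) 0 with h1 | h1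
    · have hv00 : v 0 ≠ 0 := by
        intro h0
        apply hv0
        funext i
        fin_cases i <;> simp [h0, h1]
      have he0p : e0 ∈ p := by
        have hmem := p.smul_mem (2 * I * v 0)⁻¹ hw'
        have heq : (2 * I * v 0)⁻¹ • ![2 * I * v 0, (0:ℂ)] = e0 := by
          funext i
          fin_cases i <;> simp [he0, Complex.I_ne_zero, hv00] <;> field_simp <;> simp [Complex.I_mul_I]
        rwa [heq] at hmem
      refine ⟨he0p, ?_⟩
      have hmem := hSmem e0 he0p
      rw [hSv_eq] at hmem
      have h2 : e1 = (-1 : ℂ) • ![e0 1, -e0 0] := by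
        funext i
        fin_cases i <;> simp [he0, he1]
      rw [h2]
      exact p.smul_mem _ hmem
    · have he1p : e1 ∈ p := by
        have hmem := p.smul_mem (2 * I * v 1)⁻¹ hw
        have heq : (2 * I * v 1)⁻¹ • ![(0:ℂ), 2 * I * v 1] = e1 := by
          funext i
          fin_cases i <;> simp [he1, Complex.I_ne_zero, h1] <;> field_simp <;> simp [Complex.I_mul_I]
        rwa [heq] at hmem
      refine ⟨?_, he1p⟩
      have hmem := hSmem e1 he1p
      rw [hSv_eq] at hmem
      have heq : ![e1 1, -e1 0] = e0 := by
        funext i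
        fin_cases i <;> simp [he0, he1]
      rwa [heq] at hmem
  rw [Submodule.eq_top_iff']
  intro x
  have hx : x = x 0 • e0 + x 1 • e1 := by
    funext i
    fin_cases i <;> simp [he0, he1]
  rw [hx]
  exact p.add_mem (p.smul_mem _ key.1) (p.smul_mem _ key.2)

theorem QV_simple : Simple QV :=
  FDRep.simple_of_invariant_submodules QV
    (by show 0 < Module.finrank ℂ (Fin 2 → ℂ); simp)
    (fun p hp => qv_subspaces p hp)

end

end QuaternionRep

theorem charInner_apply {H : Type} [Group H] [Finite H] (inst : Fintype H) (α β : H → ℂ) :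
    charInner H α β = (Nat.card H : ℂ)⁻¹ * ∑ h : H, α h * (starRingEnd ℂ) (β h) := by
  rw [Subsingleton.elim inst (Fintype.ofFinite H)]
  rfl

section OneDim

variable {H : Type} [Group H]

/-- auxiliary: the one-dimensional representation attached to a `ℂ`-valued character -/
noncomputable def oneDimRepAux (f : H →* ℂ) : Representation ℂ H ℂ where
  toFun h := f h • (LinearMap.id : ℂ →ₗ[ℂ] ℂ)
  map_one' := by
    show f 1 • (LinearMap.id : ℂ →ₗ[ℂ] ℂ) = 1
    rw [map_one, one_smul]
    rfl
  map_mul' x y := by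
    apply LinearMap.ext
    intro c
    simp only [map_mul, LinearMap.smul_apply, LinearMap.id_apply, Module.End.mul_apply,
      smul_eq_mul]
    ring

noncomputable def oneDimRep (f : H →* ℂ) : FDRep ℂ H := FDRep.of (oneDimRepAux f)

theorem oneDimRep_char (f : H →* ℂ) (h : H) : (oneDimRep f).character h = f h := by
  have h1 : (oneDimRep f).character h = trace ℂ ℂ (oneDimRepAux f h) := rfl
  rw [h1]
  show trace ℂ ℂ (f h • (LinearMap.id : ℂ →ₗ[ℂ] ℂ)) = f h
  rw [map_smul, trace_id, finrank_self]
  simp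

theorem oneDimRep_simple (f : H →* ℂ) : Simple (oneDimRep f) :=
  FDRep.simple_of_finrank_one _ (by exact finrank_self ℂ)

end OneDim

section Q8facts

theorem q8_sq_eq_one (g : QuaternionGroup 2) (hg : g * g = 1) :
    g = 1 ∨ g = QuaternionGroup.a 2 := by
  revert hg
  revert g
  decide

theorem q8_a2_ne_one : (QuaternionGroup.a 2 : QuaternionGroup 2) ≠ 1 := by decide

theorem q8_a2_mul_a2 : (QuaternionGroup.a 2 : QuaternionGroup 2) * .a 2 = 1 := by decide

end Q8facts

/-- A proper subgroup `H` of the quaternion group `Q₈` is a strong Gelfand subgroup of `Q₈`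
if and only if `H` has order 4. -/
theorem quaternionGroup_strongGelfand_iff (H : Subgroup (QuaternionGroup 2))
    (hH : H < ⊤) :
    IsStrongGelfandPair (QuaternionGroup 2) H ↔ Nat.card H = 4 := by
  have hcardG : Nat.card (QuaternionGroup 2) = 8 := by
    rw [Nat.card_eq_fintype_card, QuaternionGroup.card]
  constructor
  · -- forward direction
    intro hsgp
    have hdvd : Nat.card H ∣ 8 := hcardG ▸ Subgroup.card_subgroup_dvd_card H
    have hne : Nat.card H ≠ 8 := by
      intro h8
      exact hH.ne (Subgroup.eq_top_of_card_eq H (by rw [h8, hcardG]))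
    have henum : Nat.card H = 1 ∨ Nat.card H = 2 ∨ Nat.card H = 4 := by
      have h8 : Nat.card H ≤ 8 := Nat.le_of_dvd (by norm_num) hdvd
      set m := Nat.card H with hm
      clear_value m
      interval_cases m <;> revert hdvd hne <;> decide
    rcases henum with h1 | h2 | h4
    · -- |H| = 1
      exfalso
      haveI : Subsingleton H := (Nat.card_eq_one_iff_unique.1 h1).1
      letI instH : Fintype H := Fintype.ofFinite H
      have hb := hsgp QV.character ((oneDimRep (1 : H →* ℂ)).character)
        ⟨QV, QV_simple, rfl⟩ ⟨_, oneDimRep_simple _, rfl⟩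
      have hval : charInner H (fun h : H => QV.character (h : QuaternionGroup 2))
          ((oneDimRep (1 : H →* ℂ)).character) = 2 := by
        rw [charInner_apply instH]
        rw [Fintype.sum_subsingleton _ (1 : H)]
        rw [h1, oneDimRep_char, Subgroup.coe_one, QV_char_one]
        norm_num
      rw [hval] at hb
      have hcon : (2:ℝ) ≤ 1 := by
        have := Complex.le_def.1 hb
        simpa using this.1
      norm_num at hcon
    · -- |H| = 2
      exfalso
      have hsq : ∀ x : H, (x : QuaternionGroup 2) = 1 ∨ (x : QuaternionGroup 2) = .a 2 := by
        intro x
        have hx2 : x * x = 1 := by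
          have := pow_card_eq_one' (G := H) (x := x)
          rwa [h2, pow_two] at this
        have hx2' : (x : QuaternionGroup 2) * (x : QuaternionGroup 2) = 1 := by
          rw [← Subgroup.coe_mul, hx2, Subgroup.coe_one]
        exact q8_sq_eq_one _ hx2'
      have hex : ∃ x : H, (x : QuaternionGroup 2) = .a 2 := by
        by_contra hno
        push_neg at hno
        have hall : ∀ x : H, x = 1 := by
          intro x
          rcases hsq x with h | h
          · exact Subtype.ext h
          · exact absurd h (hno x)
        have hcard1 : Nat.card H = 1 := by
          rw [Nat.card_eq_one_iff_unique]
          exact ⟨⟨fun a b => (hall a).trans (hall b).symm⟩, ⟨1⟩⟩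
        omega
      obtain ⟨xa2, hxa2⟩ := hex
      have hsgn : ∃ f : H →* ℂ, ∀ x : H,
          f x = if (x : QuaternionGroup 2) = 1 then 1 else -1 := by
        refine ⟨⟨⟨fun x => if (x : QuaternionGroup 2) = 1 then 1 else -1, ?_⟩, ?_⟩, fun x => rfl⟩
        · simp
        · intro x y
          rcases hsq x with hx | hx <;> rcases hsq y with hy | hy <;>
            simp only [Subgroup.coe_mul, hx, hy, one_mul, mul_one, q8_a2_mul_a2] <;>
            simp [q8_a2_ne_one]
      obtain ⟨f, hf⟩ := hsgn
      letI instH : Fintype H := Fintype.ofFinite H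
      have hb := hsgp QV.character ((oneDimRep f).character)
        ⟨QV, QV_simple, rfl⟩ ⟨_, oneDimRep_simple _, rfl⟩
      have hval : charInner H (fun h : H => QV.character (h : QuaternionGroup 2))
          ((oneDimRep f).character) = 2 := by
        rw [charInner_apply instH]
        have hne1 : (1 : H) ≠ xa2 := by
          intro hcontra
          apply q8_a2_ne_one
          rw [← hxa2, ← hcontra, Subgroup.coe_one]
        have huniv : (Finset.univ : Finset H) = {1, xa2} := by
          symm
          apply Finset.eq_univ_of_card
          rw [Finset.card_insert_of_notMem (by simp [hne1]), Finset.card_singleton]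
          rw [← Nat.card_eq_fintype_card, h2]
        rw [huniv, Finset.sum_pair hne1, h2]
        rw [oneDimRep_char, oneDimRep_char, hf, hf, Subgroup.coe_one, hxa2,
          QV_char_one, QV_char_a2, if_pos rfl, if_neg q8_a2_ne_one]
        norm_num
      rw [hval] at hb
      have hcon : (2:ℝ) ≤ 1 := by
        have := Complex.le_def.1 hb
        simpa using this.1
      norm_num at hcon
    · exact h4
  · -- reverse direction
    intro h4
    intro χ ψ hχ hψ
    obtain ⟨V, hV, rfl⟩ := hχ
    obtain ⟨W, hW, rfl⟩ := hψ
    haveI := hV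
    haveI := hW
    letI instH : Fintype H := Fintype.ofFinite H
    letI instG : Fintype (QuaternionGroup 2) := Fintype.ofFinite (QuaternionGroup 2)
    set RV : FDRep ℂ H := FDRep.of (V.ρ.comp H.subtype) with hRV
    have hres : (fun h : H => V.character (h : QuaternionGroup 2)) = RV.character := rfl
    rw [hres]
    set n : ℕ := finrank ℂ (W ⟶ RV) with hn
    have key1 : charInner H RV.character W.character = (n : ℂ) :=
      charInner_eq_finrank_hom RV W
    rw [key1]
    -- the three sum identities
    have hWW : charInner H W.character W.character = 1 := by
      rw [charInner_eq_finrank_hom W W, FDRep.finrank_hom_simple_simple W W,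
        if_pos ⟨Iso.refl W⟩]
      norm_num
    have hVV : charInner (QuaternionGroup 2) V.character V.character = 1 := by
      rw [charInner_eq_finrank_hom V V, FDRep.finrank_hom_simple_simple V V,
        if_pos ⟨Iso.refl V⟩]
      norm_num
    have hsumW : (∑ h : H, Complex.normSq (W.character h)) = 4 := by
      rw [charInner_apply instH, h4] at hWW
      have hs : (∑ h : H, W.character h * (starRingEnd ℂ) (W.character h)) = 4 := by
        have h40 : ((4:ℕ) : ℂ) ≠ 0 := by norm_num
        field_simp at hWW
        linear_combination hWW
      have hc : ((∑ h : H, Complex.normSq (W.character h) : ℝ) : ℂ) = 4 := by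
        push_cast
        rw [← hs]
        exact Finset.sum_congr rfl fun h _ => (Complex.mul_conj _).symm
      exact_mod_cast hc
    have hsumV : (∑ g : QuaternionGroup 2, Complex.normSq (V.character g)) = 8 := by
      rw [charInner_apply instG, hcardG] at hVV
      have hs : (∑ g : QuaternionGroup 2,
          V.character g * (starRingEnd ℂ) (V.character g)) = 8 := by
        field_simp at hVV
        linear_combination hVV
      have hc : ((∑ g : QuaternionGroup 2, Complex.normSq (V.character g) : ℝ) : ℂ) = 8 := by
        push_cast
        rw [← hs]
        exact Finset.sum_congr rfl fun g _ => (Complex.mul_conj _).symm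
      exact_mod_cast hc
    have hsumVH : (∑ h : H, Complex.normSq (V.character (h : QuaternionGroup 2))) ≤ 8 := by
      rw [← hsumV]
      have himg : (∑ h : H, Complex.normSq (V.character (h : QuaternionGroup 2)))
          = ∑ g ∈ Finset.univ.image (fun h : H => (h : QuaternionGroup 2)),
              Complex.normSq (V.character g) := by
        rw [Finset.sum_image]
        intro x _ y _ hxy
        exact Subtype.ext hxy
      rw [himg]
      apply Finset.sum_le_sum_of_subset_of_nonneg (Finset.subset_univ _)
      intro g _ _
      exact Complex.normSq_nonneg _
    -- the sum computing 4n
    have hsum_n : (∑ h : H, RV.character h * (starRingEnd ℂ) (W.character h)) = (4 * n : ℂ) := by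
      rw [charInner_apply instH, h4] at key1
      have h40 : ((4:ℕ) : ℂ) ≠ 0 := by norm_num
      field_simp at key1
      linear_combination key1
    -- Cauchy–Schwarz bound
    have hRVchar : ∀ h : H, RV.character h = V.character (h : QuaternionGroup 2) := fun h => rfl
    have habs_le : (4 * n : ℝ) ≤ ∑ h : H,
        ‖V.character (h : QuaternionGroup 2)‖ * ‖W.character h‖ := by
      have h1 : ‖∑ h : H, RV.character h * (starRingEnd ℂ) (W.character h)‖
          = (4 * n : ℝ) := by
        rw [hsum_n]
        rw [show ((4 : ℂ) * n) = (((4 * n : ℝ)) : ℂ) by push_cast; ring]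
        rw [Complex.norm_real, Real.norm_eq_abs, abs_of_nonneg (by positivity)]
      rw [← h1]
      refine le_trans (norm_sum_le _ _) ?_
      apply le_of_eq
      apply Finset.sum_congr rfl
      intro h _
      rw [norm_mul, Complex.norm_conj, hRVchar]
    have hCS := Finset.sum_mul_sq_le_sq_mul_sq Finset.univ
      (fun h : H => ‖V.character (h : QuaternionGroup 2)‖)
      (fun h : H => ‖W.character h‖)
    have hsq1 : (∑ h : H, ‖V.character (h : QuaternionGroup 2)‖ ^ 2) ≤ 8 := by
      rw [show (∑ h : H, ‖V.character (h : QuaternionGroup 2)‖ ^ 2)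
          = ∑ h : H, Complex.normSq (V.character (h : QuaternionGroup 2)) from
        Finset.sum_congr rfl fun h _ => Complex.sq_norm _]
      exact hsumVH
    have hsq2 : (∑ h : H, ‖W.character h‖ ^ 2) = 4 := by
      rw [show (∑ h : H, ‖W.character h‖ ^ 2)
          = ∑ h : H, Complex.normSq (W.character h) from
        Finset.sum_congr rfl fun h _ => Complex.sq_norm _]
      exact hsumW
    have hn1 : n ≤ 1 := by
      by_contra hcon
      push_neg at hcon
      have hn2 : (2 : ℝ) ≤ (n : ℝ) := by exact_mod_cast hcon
      have hb1 : ((4 : ℝ) * n) ^ 2 ≤ 8 * 4 := by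
        calc ((4:ℝ) * n) ^ 2 ≤ (∑ h : H,
            ‖V.character (h : QuaternionGroup 2)‖ * ‖W.character h‖) ^ 2 := by
              apply pow_le_pow_left₀ (by positivity) habs_le
          _ ≤ (∑ h : H, ‖V.character (h : QuaternionGroup 2)‖ ^ 2)
              * (∑ h : H, ‖W.character h‖ ^ 2) := hCS
          _ ≤ 8 * 4 := by
              rw [hsq2]
              exact mul_le_mul_of_nonneg_right hsq1 (by norm_num)
      nlinarith
    -- conclude
    interval_cases n
    · norm_num [Complex.le_def]
    · norm_num [Complex.le_def]
end
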